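/- (Appendix, Brownian motion, linear trend model.) Let 0 < A < B < t₀ and K(t,s) = min(t,s). Then for every finite signed measure Q on [A,B] with ∫_{[A,B]} t Q(dt) = t₀, one has t₀ − 2 ∫_{[A,B]} min(t, t₀) Q(dt) + ∬_{[A,B]×[A,B]} min(t,s) Q(dt)Q(ds) ≥ (t₀/B)(t₀ − B), with equality for Q = (t₀/B) δ_B. In other words, in the model y(t) = θ t + ε(t) with Brownian motion error observed on [A,B], the BLUP of y(t₀) is ŷ(t₀) = (t₀/B) y(B) and its mean squared error is (t₀/B)(t₀ − B). -/

import Mathlib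

/-!
On `[0, B]` the Brownian kernel has the feature representation
`min t s = ∫₀^B 1[u < t] 1[u < s] du`, and likewise `t = ∫₀^B 1[u < t] du`. Swapping the
order of integration, `∬ min dQ dQ = ∫₀^B F²` and `∫ t Q(dt) = ∫₀^B F` with
`F u = Q((u, B])`, so Cauchy–Schwarz on `[0, B]` gives `∬ min dQ dQ ≥ t₀² / B`. Since
`t ≤ B < t₀` on the support, `∫ min(t, t₀) Q(dt) = t₀`, and `(t₀/B) δ_B` attains the bound.
-/

open MeasureTheory

/-- Integral of a real function against a finite signed measure, via the Jordan
decomposition. -/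
noncomputable def sInt {α : Type*} [MeasurableSpace α] (μ : SignedMeasure α) (g : α → ℝ) : ℝ :=
  (∫ x, g x ∂μ.toJordanDecomposition.posPart) - ∫ x, g x ∂μ.toJordanDecomposition.negPart

open Set Function

section SignedIntegral

variable {α β : Type*} [MeasurableSpace α] [MeasurableSpace β] (Q : SignedMeasure α)

lemma sInt_const_mul (c : ℝ) (g : α → ℝ) : sInt Q (fun a => c * g a) = c * sInt Q g := by
  simp only [sInt, integral_const_mul, mul_sub]

lemma abs_sInt_le {g : α → ℝ} {C : ℝ} (hg : ∀ a, |g a| ≤ C) :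
    |sInt Q g| ≤ C * (Q.toJordanDecomposition.posPart.real univ
      + Q.toJordanDecomposition.negPart.real univ) := by
  have h (μ : Measure α) [IsFiniteMeasure μ] : |∫ a, g a ∂μ| ≤ C * μ.real univ :=
    norm_integral_le_of_norm_le_const (ae_of_all _ hg : ∀ᵐ a ∂μ, ‖g a‖ ≤ C)
  rw [mul_add]
  exact (abs_sub _ _).trans (add_le_add (h _) (h _))

lemma sInt_toSignedMeasure (μ : Measure α) [IsFiniteMeasure μ] (g : α → ℝ) :
    sInt μ.toSignedMeasure g = ∫ a, g a ∂μ := by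
  have : μ.toSignedMeasure.toJordanDecomposition = ⟨μ, 0, .zero_right⟩ :=
    SignedMeasure.toJordanDecomposition_eq <| by
      simp [JordanDecomposition.toSignedMeasure]
  simp [sInt, this]

lemma sInt_smul_toSignedMeasure (μ : Measure α) [IsFiniteMeasure μ] {r : ℝ} (hr : 0 ≤ r)
    (g : α → ℝ) :
    sInt (r • μ.toSignedMeasure) g = r * ∫ a, g a ∂μ := by
  have : r • μ.toSignedMeasure = (r.toNNReal • μ).toSignedMeasure := by
    rw [Measure.toSignedMeasure_smul, NNReal.smul_def, Real.coe_toNNReal r hr]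
  rw [this, sInt_toSignedMeasure, integral_smul_nnreal_measure, NNReal.smul_def,
    smul_eq_mul, Real.coe_toNNReal r hr]

lemma measurable_sInt {f : β → α → ℝ} (hf : Measurable (uncurry f)) :
    Measurable fun b => sInt Q (f b) :=
  hf.stronglyMeasurable.integral_prod_right.measurable.sub
    hf.stronglyMeasurable.integral_prod_right.measurable

lemma sInt_integral_comm (ν : Measure β) [IsFiniteMeasure ν] {f : β → α → ℝ}
    (hf : Measurable (uncurry f)) {C : ℝ} (hC : ∀ b a, |f b a| ≤ C) :
    sInt Q (fun a => ∫ b, f b a ∂ν) = ∫ b, sInt Q (f b) ∂ν := by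
  have swap (μ : Measure α) [IsFiniteMeasure μ] :
      ∫ a, ∫ b, f b a ∂ν ∂μ = ∫ b, ∫ a, f b a ∂μ ∂ν :=
    integral_integral_swap <| Integrable.of_bound
      (hf.comp measurable_swap).aestronglyMeasurable C (ae_of_all _ fun p => hC p.2 p.1)
  have integrable (μ : Measure α) [IsFiniteMeasure μ] :
      Integrable (fun b => ∫ a, f b a ∂μ) ν :=
    Integrable.of_bound hf.stronglyMeasurable.integral_prod_right.aestronglyMeasurable
      (C * μ.real univ) (ae_of_all _ fun b => norm_integral_le_of_norm_le_const
        (ae_of_all _ (hC b)))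
  simp only [sInt]
  rw [swap, swap, integral_sub (integrable _) (integrable _)]

theorem sInt_sInt_integral_mul_eq_integral_sq (ν : Measure β) [IsFiniteMeasure ν]
    {φ : β → α → ℝ} (hφ : Measurable (uncurry φ)) {C : ℝ} (hC : ∀ b a, |φ b a| ≤ C) :
    sInt Q (fun a => sInt Q fun a' => ∫ b, φ b a * φ b a' ∂ν)
      = ∫ b, sInt Q (φ b) ^ 2 ∂ν := by
  set F := fun b => sInt Q (φ b)
  have abs_mul_le {x y c d : ℝ} (hx : |x| ≤ c) (hy : |y| ≤ d) : |x * y| ≤ c * d := by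
    rw [abs_mul]; exact mul_le_mul hx hy (abs_nonneg _) ((abs_nonneg _).trans hx)
  have inner_eq (a : α) : sInt Q (fun a' => ∫ b, φ b a * φ b a' ∂ν) = ∫ b, F b * φ b a ∂ν := by
    rw [sInt_integral_comm Q ν (f := fun b a' => φ b a * φ b a')
      ((hφ.comp (measurable_fst.prodMk measurable_const)).mul hφ)
      (fun b a' => abs_mul_le (hC b a) (hC b a'))]
    simp only [sInt_const_mul, F, mul_comm]
  simp only [inner_eq]
  rw [sInt_integral_comm Q ν (f := fun b a => F b * φ b a)
    (((measurable_sInt Q hφ).comp measurable_fst).mul hφ)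
    (fun b a => abs_mul_le (abs_sInt_le Q (hC b)) (hC b a))]
  simp only [sInt_const_mul, F, sq]

end SignedIntegral

/-- Cauchy–Schwarz against a constant, in the form `(F - c)² ≥ 0` integrated. -/
lemma two_mul_mul_integral_sub_le_integral_sq {β : Type*} [MeasurableSpace β] (μ : Measure β)
    [IsFiniteMeasure μ] {F : β → ℝ} (hF : MemLp F 2 μ) (c : ℝ) :
    2 * c * ∫ b, F b ∂μ - c ^ 2 * μ.real univ ≤ ∫ b, F b ^ 2 ∂μ := by
  have hF1 : Integrable F μ := hF.integrable one_le_two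
  have key : ∫ b, (2 * c * F b - c ^ 2) ∂μ ≤ ∫ b, F b ^ 2 ∂μ :=
    integral_mono ((hF1.const_mul _).sub (integrable_const _)) hF.integrable_sq
      fun b => by nlinarith [sq_nonneg (F b - c)]
  rwa [integral_sub (hF1.const_mul _) (integrable_const _), integral_const_mul,
    integral_const, smul_eq_mul, mul_comm (μ.real univ)] at key

lemma setIntegral_Ioc_indicator_Iio {B c : ℝ} (hc : 0 ≤ c) (hcB : c ≤ B) :
    ∫ u in Ioc 0 B, (Iio c).indicator 1 u = c := by
  have hIoo : Ioc 0 B ∩ Iio c = Ioo 0 c := by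
    ext u
    simp only [mem_inter_iff, mem_Ioc, mem_Iio, mem_Ioo]
    exact ⟨fun h => ⟨h.1.1, h.2⟩, fun h => ⟨⟨h.1, h.2.le.trans hcB⟩, h.2⟩⟩
  rw [setIntegral_indicator measurableSet_Iio, hIoo]
  simp [hc]

theorem sq_sInt_coe_le_mul_sInt_sInt_min {A B : ℝ} (hA : 0 ≤ A) (hB : 0 < B)
    (Q : SignedMeasure (Icc A B)) :
    (sInt Q fun t => t.1) ^ 2 ≤ B * sInt Q fun t => sInt Q fun s => min t.1 s.1 := by
  set φ : ℝ → Icc A B → ℝ := fun u t => (Iio t.1).indicator 1 u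
  have hφ : Measurable (uncurry φ) :=
    measurable_const.indicator (measurableSet_lt measurable_fst
      (measurable_subtype_coe.comp measurable_snd))
  have hφC (u : ℝ) (t : Icc A B) : |φ u t| ≤ 1 := by
    simp only [φ, indicator_apply]; split_ifs <;> simp
  have ht (t : Icc A B) : 0 ≤ t.1 := hA.trans t.2.1
  have hcoe : (fun t : Icc A B => t.1) = fun t => ∫ u in Ioc 0 B, φ u t :=
    funext fun t => (setIntegral_Ioc_indicator_Iio (ht t) t.2.2).symm
  have hmin (t s : Icc A B) : min t.1 s.1 = ∫ u in Ioc 0 B, φ u t * φ u s := by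
    rw [← setIntegral_Ioc_indicator_Iio (le_min (ht t) (ht s)) (min_le_of_left_le t.2.2),
      ← Iio_inter_Iio, inter_indicator_one]
    rfl
  have hLp : MemLp (fun u => sInt Q (φ u)) 2 (volume.restrict (Ioc 0 B)) :=
    MemLp.of_bound (measurable_sInt Q hφ).aestronglyMeasurable _
      (ae_of_all _ fun u => abs_sInt_le Q (hφC u))
  have hmean : (sInt Q fun t => t.1) = ∫ u in Ioc 0 B, sInt Q (φ u) := by
    rw [← sInt_integral_comm Q _ hφ hφC, ← hcoe]
  simp only [hmin]
  rw [sInt_sInt_integral_mul_eq_integral_sq Q _ hφ hφC]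
  have key := two_mul_mul_integral_sub_le_integral_sq _ hLp ((sInt Q fun t => t.1) / B)
  rw [← hmean, measureReal_restrict_apply_univ, Real.volume_real_Ioc_of_le hB.le, sub_zero] at key
  have hquad : ∀ m : ℝ, 2 * (m / B) * m - (m / B) ^ 2 * B = m ^ 2 / B := fun m => by
    field_simp; ring
  rw [hquad, div_le_iff₀ hB] at key
  linarith

/-- Appendix, Brownian motion, linear trend model.  For
`0 < A < B < t₀` and `K(t,s) = min(t,s)`, every finite signed measure `Q` on `[A,B]`
with `∫ t Q(dt) = t₀` satisfies
`t₀ − 2∫ min(t,t₀) Q(dt) + ∬ min(t,s) Q(dt)Q(ds) ≥ (t₀/B)(t₀ − B)`, with equality for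
`Q = (t₀/B) δ_B`: the BLUP of `y(t₀)` in the model `y(t) = θt + ε(t)` is `(t₀/B) y(B)`
with mean squared error `(t₀/B)(t₀ − B)`. -/
theorem brownian_linear_trend_blup (A B t0 : ℝ)
    (hA : 0 < A) (hAB : A < B) (hBt0 : B < t0) :
    (∀ Q : SignedMeasure (Set.Icc A B), (sInt Q fun t => t.1) = t0 →
      (t0 / B) * (t0 - B) ≤ t0 - 2 * (sInt Q fun t => min t.1 t0)
        + (sInt Q fun t => sInt Q fun s => min t.1 s.1)) ∧
    (∀ Qδ : SignedMeasure (Set.Icc A B),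
      Qδ = (t0 / B) •
        (Measure.dirac (⟨B, le_of_lt hAB, le_refl B⟩ : Set.Icc A B)).toSignedMeasure →
      t0 - 2 * (sInt Qδ fun t => min t.1 t0)
        + (sInt Qδ fun t => sInt Qδ fun s => min t.1 s.1) = (t0 / B) * (t0 - B)) := by
  have hB : 0 < B := hA.trans hAB
  have hmse : (t0 / B) * (t0 - B) = t0 ^ 2 / B - t0 := by field_simp
  refine ⟨fun Q hQ => ?_, fun Qδ hQδ => ?_⟩
  · have hmin : (fun t : Icc A B => min t.1 t0) = fun t => t.1 :=
      funext fun t => min_eq_left (t.2.2.trans hBt0.le)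
    have key := sq_sInt_coe_le_mul_sInt_sInt_min hA.le hB Q
    rw [hQ, ← div_le_iff₀' hB] at key
    rw [hmin, hQ, hmse]
    linarith
  · subst hQδ
    have hr : 0 ≤ t0 / B := div_nonneg (hB.trans hBt0).le hB.le
    simp only [sInt_smul_toSignedMeasure _ hr, integral_dirac, min_self, min_eq_left hBt0.le]
    field_simp
    ring
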